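/- arXiv:1209.3455 — 2 statements merged into one kernel-verified Lean document; each statement's English description precedes it below -/
import Mathlib

section
/- Let t, n be integers with t > 1 and let G be a connected graph on n vertices with clique number exactly t that is not isomorphic to the Turán graph T_{n,t}. Then G ≺_s T_{n,t}, i.e., G strictly precedes T_{n,t} in the lexicographic spectral-moment order. In particular, S_0(G) = S_0(T_{n,t}), S_1(G) = S_1(T_{n,t}), and S_2(G) < S_2(T_{n,t}). -/
open SimpleGraph

/-- The `k`-th spectral moment of a graph: the trace of the `k`-th power of its
adjacency matrix (over `ℝ`). -/
noncomputable def spectralMoment {V : Type*} [Fintype V] [DecidableEq V]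
    (G : SimpleGraph V) (k : ℕ) : ℝ :=
  letI : DecidableRel G.Adj := Classical.decRel _
  Matrix.trace ((G.adjMatrix ℝ) ^ k)

/-- `G₁ ≺ₛ G₂` : the spectral moment sequence `(S_0, …, S_{n-1})` of `G₁` is
lexicographically strictly smaller than that of `G₂` (both graphs have `n` vertices). -/
noncomputable def SPrec {α β : Type*} [Fintype α] [DecidableEq α] [Fintype β] [DecidableEq β]
    (G₁ : SimpleGraph α) (G₂ : SimpleGraph β) : Prop :=
  ∃ k, 1 ≤ k ∧ k ≤ Fintype.card α - 1 ∧
    (∀ i < k, spectralMoment G₁ i = spectralMoment G₂ i) ∧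
    spectralMoment G₁ k < spectralMoment G₂ k

/-! By Turán's theorem a `K_{t+1}`-free graph on `n` vertices that is not `T_{n,t}` has fewer
edges than `T_{n,t}`, and `S_2 = 2|E|`, while `S_0 = n` and `S_1 = 0` for every graph. If
`t ≥ n`, then both `G` and `T_{n,t}` would be `K_n`, so `t < n`; thus `2 ≤ n - 1` and the index `2`
witnesses `G ≺ₛ T_{n,t}`. -/

open Finset

section SpectralMoment

variable {V : Type*} [Fintype V] [DecidableEq V] (G : SimpleGraph V)

lemma spectralMoment_zero : spectralMoment G 0 = Fintype.card V := by
  simp [spectralMoment]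

lemma spectralMoment_one : spectralMoment G 1 = 0 := by
  simp [spectralMoment]

lemma spectralMoment_two [inst : DecidableRel G.Adj] :
    spectralMoment G 2 = 2 * #G.edgeFinset := by
  unfold spectralMoment
  rw [Subsingleton.elim (Classical.decRel G.Adj) inst, pow_two, Matrix.trace]
  simp only [Matrix.diag_apply, adjMatrix_mul_self_apply_self]
  exact_mod_cast sum_degrees_eq_twice_card_edges G

end SpectralMoment

lemma sPrec_of_spectralMoment_two_lt {α β : Type*} [Fintype α] [DecidableEq α] [Fintype β]
    [DecidableEq β] {G₁ : SimpleGraph α} {G₂ : SimpleGraph β}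
    (hcard : Fintype.card α = Fintype.card β) (h3 : 3 ≤ Fintype.card α)
    (h2 : spectralMoment G₁ 2 < spectralMoment G₂ 2) : SPrec G₁ G₂ := by
  refine ⟨2, one_le_two, by omega, fun i hi => ?_, h2⟩
  interval_cases i
  · rw [spectralMoment_zero, spectralMoment_zero, hcard]
  · rw [spectralMoment_one, spectralMoment_one]

section CliqueNum

variable {V : Type*} [Fintype V] {G : SimpleGraph V}

lemma cliqueFree_cliqueNum_succ : G.CliqueFree (G.cliqueNum + 1) :=
  fun s hs => by simpa [hs.card_eq] using hs.isClique.card_le_cliqueNum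

lemma eq_top_of_card_le_cliqueNum (h : Fintype.card V ≤ G.cliqueNum) : G = ⊤ := by
  classical
  obtain ⟨s, hs⟩ := G.exists_isNClique_cliqueNum
  have hs_univ : s = Finset.univ :=
    Finset.eq_univ_of_card s (le_antisymm (Finset.card_le_univ s) (hs.card_eq ▸ h))
  exact isClique_univ.mp (by simpa [hs_univ] using hs.isClique)

end CliqueNum

lemma card_edgeFinset_lt_turanGraph {n r : ℕ} (hr : 0 < r) {G : SimpleGraph (Fin n)}
    [DecidableRel G.Adj] (hG : G.CliqueFree (r + 1)) (hiso : ¬ Nonempty (G ≃g turanGraph n r)) :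
    #G.edgeFinset < #(turanGraph n r).edgeFinset := by
  have hturan := isTuranMaximal_turanGraph (n := n) hr
  refine (hturan.2 hG).lt_of_ne fun heq => hiso ?_
  have hGmax : G.IsTuranMaximal r := ⟨hG, fun _ _ hH => (hturan.2 hH).trans_eq heq.symm⟩
  have hiso' := (isTuranMaximal_iff_nonempty_iso_turanGraph hr).mp hGmax
  rwa [Fintype.card_fin] at hiso'

theorem sPrec_turanGraph_general (n t : ℕ) (ht : 1 < t) (G : SimpleGraph (Fin n))
    (hclique : G.cliqueNum = t)
    (hiso : ¬ Nonempty (G ≃g turanGraph n t)) :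
    SPrec G (turanGraph n t) ∧
      spectralMoment G 0 = spectralMoment (turanGraph n t) 0 ∧
      spectralMoment G 1 = spectralMoment (turanGraph n t) 1 ∧
      spectralMoment G 2 < spectralMoment (turanGraph n t) 2 := by
  classical
  have htn : t < n := by
    by_contra! hnt
    have hG : G = ⊤ := eq_top_of_card_le_cliqueNum (by simpa [hclique] using hnt)
    exact hiso ⟨(hG.trans (turanGraph_eq_top.mpr (.inr hnt)).symm) ▸ Iso.refl⟩
  have hedges := card_edgeFinset_lt_turanGraph (by omega) (hclique ▸ cliqueFree_cliqueNum_succ) hiso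
  have h2 : spectralMoment G 2 < spectralMoment (turanGraph n t) 2 := by
    rw [spectralMoment_two, spectralMoment_two]
    exact mul_lt_mul_of_pos_left (by exact_mod_cast hedges) two_pos
  refine ⟨sPrec_of_spectralMoment_two_lt (by simp) (by simp; omega) h2, ?_, ?_, h2⟩
  · rw [spectralMoment_zero, spectralMoment_zero]
  · rw [spectralMoment_one, spectralMoment_one]

/-- Every connected `n`-vertex graph with clique number `t` other than the Turán graph
strictly precedes the Turán graph `T_{n,t}` in the spectral-moment order. -/
theorem sPrec_turanGraph (n t : ℕ) (ht : 1 < t) (G : SimpleGraph (Fin n))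
    (hconn : G.Connected) (hclique : G.cliqueNum = t)
    (hiso : ¬ Nonempty (G ≃g turanGraph n t)) :
    SPrec G (turanGraph n t) ∧
      spectralMoment G 0 = spectralMoment (turanGraph n t) 0 ∧
      spectralMoment G 1 = spectralMoment (turanGraph n t) 1 ∧
      spectralMoment G 2 < spectralMoment (turanGraph n t) 2 :=
  sPrec_turanGraph_general n t ht G hclique hiso
end

section
/- Let T_{n,n-1} be the Turán graph on n vertices with n−1 parts (i.e., parts V_1,…,V_{n-2} are the singletons {v_1},…,{v_{n-2}} and V_{n-1} = {v_{n-1}, u}), and for 1 ≤ i ≤ n−3 let T_i = T_{n,n-1} − {uv_1, …, uv_i}. Then the set of all connected n-vertex graphs with clique number n−1 is exactly {T_{n,n-1}, T_1, …, T_{n-3}}, and they are totally ordered in the spectral-moment order as T_{n-3} ≺_s T_{n-4} ≺_s ⋯ ≺_s T_1 ≺_s T_{n,n-1}. -/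
open SimpleGraph

/-- The graph `T_i` of the paper, on vertex set `{v_1, …, v_{n-1}} ⊕ {u}`
(here `v_j = Sum.inl ⟨j-1⟩` and `u = Sum.inr ()`): the vertices `v_1, …, v_{n-1}` form a
complete graph `K_{n-1}`, and `u` is adjacent to every `v_j` except `v_{n-1}` and except
`v_1, …, v_i`.  Thus `TuranMinus n 0` is the Turán graph `T_{n,n-1}` (that is, `K_n` minus
the edge `u v_{n-1}`), and `TuranMinus n i = T_{n,n-1} - {u v_1, …, u v_i}` is `T_i`. -/
def TuranMinus (n i : ℕ) : SimpleGraph (Fin (n - 1) ⊕ Unit) :=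
  SimpleGraph.fromRel fun x y =>
    match x, y with
    | Sum.inl a, Sum.inl b => a ≠ b
    | Sum.inl a, Sum.inr _ => i ≤ (a : ℕ) ∧ (a : ℕ) ≠ n - 2
    | Sum.inr _, Sum.inl a => i ≤ (a : ℕ) ∧ (a : ℕ) ≠ n - 2
    | _, _ => False

lemma tm_adj_inl_inl {n i : ℕ} (a b : Fin (n-1)) :
    (TuranMinus n i).Adj (.inl a) (.inl b) ↔ a ≠ b := by
  simp [TuranMinus, fromRel_adj]; tauto

lemma tm_adj_inl_inr {n i : ℕ} (a : Fin (n-1)) (u : Unit) :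
    (TuranMinus n i).Adj (.inl a) (.inr u) ↔ (i ≤ (a:ℕ) ∧ (a:ℕ) ≠ n - 2) := by
  simp [TuranMinus, fromRel_adj]

lemma tm_adj_inr_inl {n i : ℕ} (a : Fin (n-1)) (u : Unit) :
    (TuranMinus n i).Adj (.inr u) (.inl a) ↔ (i ≤ (a:ℕ) ∧ (a:ℕ) ≠ n - 2) := by
  simp [TuranMinus, fromRel_adj]

lemma tm_adj_inr_inr {n i : ℕ} (u v : Unit) :
    ¬ (TuranMinus n i).Adj (.inr u) (.inr v) := by
  simp [TuranMinus, fromRel_adj]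

lemma cliqueNum_le_of_iso {α β : Type*} [Fintype α] [Fintype β] [DecidableEq α] [DecidableEq β]
    {G : SimpleGraph α} {H : SimpleGraph β} (e : G ≃g H) : G.cliqueNum ≤ H.cliqueNum := by
  obtain ⟨s, hs⟩ := G.exists_isNClique_cliqueNum
  have hc : H.IsClique (↑(s.image (e : α → β))) := by
    intro x hx y hy hxy
    simp only [Finset.coe_image, Set.mem_image, Finset.mem_coe] at hx hy
    obtain ⟨a, ha, rfl⟩ := hx
    obtain ⟨b, hb, rfl⟩ := hy
    exact e.map_rel_iff.mpr (hs.1 ha hb (fun h => hxy (by rw [h])))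
  have hcard : (s.image (e : α → β)).card = G.cliqueNum := by
    rw [Finset.card_image_of_injective _ (RelIso.injective e), hs.2]
  calc G.cliqueNum = (s.image (e : α → β)).card := hcard.symm
    _ ≤ H.cliqueNum := IsClique.card_le_cliqueNum (tc := hc)

lemma cliqueNum_congr {α β : Type*} [Fintype α] [Fintype β] [DecidableEq α] [DecidableEq β]
    {G : SimpleGraph α} {H : SimpleGraph β} (e : G ≃g H) : G.cliqueNum = H.cliqueNum :=
  le_antisymm (cliqueNum_le_of_iso e) (cliqueNum_le_of_iso e.symm)

lemma tm_connected {n i : ℕ} (hn : 4 ≤ n) (hi : i ≤ n - 3) : (TuranMinus n i).Connected := by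
  have h1 : n - 3 < n - 1 := by omega
  have h2 : (n:ℕ) - 3 ≠ n - 2 := by omega
  set h : Fin (n-1) ⊕ Unit := Sum.inl ⟨n-3, h1⟩ with hh
  have hadj : ∀ x : Fin (n-1) ⊕ Unit, x ≠ h → (TuranMinus n i).Adj h x := by
    rintro (a | u) hx
    · rw [tm_adj_inl_inl]
      rintro rfl; exact hx rfl
    · rw [tm_adj_inl_inr]
      exact ⟨hi, h2⟩
  rw [connected_iff]
  refine ⟨fun x y => ?_, ⟨h⟩⟩
  by_cases hx : x = h
  · subst hx
    by_cases hy : y = h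
    · subst hy; rfl
    · exact (hadj y hy).reachable
  · by_cases hy : y = h
    · subst hy; exact (hadj x hx).symm.reachable
    · exact ((hadj x hx).symm.reachable).trans (hadj y hy).reachable

lemma tm_cliqueNum {n i : ℕ} (hn : 4 ≤ n) : (TuranMinus n i).cliqueNum = n - 1 := by
  have hcard : Fintype.card (Fin (n-1) ⊕ Unit) = n := by
    simp; omega
  -- lower bound
  have hclique : (TuranMinus n i).IsClique (↑((Finset.univ : Finset (Fin (n-1))).image (Sum.inl : Fin (n-1) → Fin (n-1) ⊕ Unit))) := by
    intro x hx y hy hxy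
    simp only [Finset.coe_image, Set.mem_image] at hx hy
    obtain ⟨a, -, rfl⟩ := hx
    obtain ⟨b, -, rfl⟩ := hy
    rw [tm_adj_inl_inl]
    rintro rfl; exact hxy rfl
  have hlow : n - 1 ≤ (TuranMinus n i).cliqueNum := by
    have := IsClique.card_le_cliqueNum (tc := hclique)
    rwa [Finset.card_image_of_injective _ Sum.inl_injective, Finset.card_univ, Fintype.card_fin] at this
  -- upper bound
  obtain ⟨s, hs⟩ := (TuranMinus n i).exists_isNClique_cliqueNum
  have hle : (TuranMinus n i).cliqueNum ≤ n := by
    rw [← hs.2]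
    calc s.card ≤ Fintype.card (Fin (n-1) ⊕ Unit) := Finset.card_le_univ s
      _ = n := hcard
  have hne : (TuranMinus n i).cliqueNum ≠ n := by
    intro h
    have hsuniv : s = Finset.univ := Finset.eq_univ_of_card s (by rw [hs.2, h, hcard])
    have h3 : (n:ℕ) - 2 < n - 1 := by omega
    have := hs.1 (by rw [hsuniv]; exact Finset.mem_univ (Sum.inr ()))
      (by rw [hsuniv]; exact Finset.mem_univ (Sum.inl ⟨n-2, h3⟩)) (by simp)
    rw [tm_adj_inr_inl] at this
    exact this.2 rfl
  omega

lemma tm_adj_mono {n i j : ℕ} (hij : i ≤ j) {x y : Fin (n-1) ⊕ Unit}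
    (h : (TuranMinus n j).Adj x y) : (TuranMinus n i).Adj x y := by
  simp only [TuranMinus, fromRel_adj] at h ⊢
  refine ⟨h.1, ?_⟩
  rcases x with a | u <;> rcases y with b | v
  · exact h.2
  · rcases h.2 with ⟨h1, h2⟩ | ⟨h1, h2⟩ <;> exact Or.inl ⟨le_trans hij h1, h2⟩
  · rcases h.2 with ⟨h1, h2⟩ | ⟨h1, h2⟩ <;> exact Or.inl ⟨le_trans hij h1, h2⟩
  · exact h.2

lemma sm_zero {V : Type*} [Fintype V] [DecidableEq V] (G : SimpleGraph V) :
    spectralMoment G 0 = Fintype.card V := by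
  simp [spectralMoment]

lemma sm_one {V : Type*} [Fintype V] [DecidableEq V] (G : SimpleGraph V) :
    spectralMoment G 1 = 0 := by
  classical
  simp only [spectralMoment, pow_one]
  simp [Matrix.trace]

lemma sm_two_lt {n i : ℕ} (hn : 4 ≤ n) (hi : i + 1 ≤ n - 3) :
    spectralMoment (TuranMinus n (i+1)) 2 < spectralMoment (TuranMinus n i) 2 := by
  classical
  have key : ∀ (j : ℕ) (x y : Fin (n-1) ⊕ Unit),
      (TuranMinus n j).adjMatrix ℝ x y * (TuranMinus n j).adjMatrix ℝ y x
        = if (TuranMinus n j).Adj x y then (1:ℝ) else 0 := by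
    intro j x y
    by_cases h : (TuranMinus n j).Adj x y
    · simp [h, h.symm]
    · simp [h]
  simp only [spectralMoment, sq, Matrix.trace, Matrix.mul_apply, Matrix.diag_apply]
  apply Finset.sum_lt_sum
  · intro x _
    apply Finset.sum_le_sum
    intro y _
    rw [key, key]
    by_cases h : (TuranMinus n (i+1)).Adj x y
    · rw [if_pos h, if_pos (tm_adj_mono (by omega) h)]
    · rw [if_neg h]
      split_ifs <;> norm_num
  · refine ⟨Sum.inr (), Finset.mem_univ _, ?_⟩
    apply Finset.sum_lt_sum
    · intro y _
      rw [key, key]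
      by_cases h : (TuranMinus n (i+1)).Adj (Sum.inr ()) y
      · rw [if_pos h, if_pos (tm_adj_mono (by omega) h)]
      · rw [if_neg h]
        split_ifs <;> norm_num
    · have hilt : i < n - 1 := by omega
      refine ⟨Sum.inl ⟨i, hilt⟩, Finset.mem_univ _, ?_⟩
      rw [key, key]
      have h1 : ¬ (TuranMinus n (i+1)).Adj (Sum.inr ()) (Sum.inl ⟨i, hilt⟩) := by
        simp only [TuranMinus, fromRel_adj]
        rintro ⟨-, ⟨h, -⟩ | ⟨h, -⟩⟩ <;> omega
      have h2 : (TuranMinus n i).Adj (Sum.inr ()) (Sum.inl ⟨i, hilt⟩) := by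
        simp only [TuranMinus, fromRel_adj]
        exact ⟨by simp, Or.inl ⟨le_refl i, by omega⟩⟩
      rw [if_neg h1, if_pos h2]
      norm_num

def pieceFun {n m : ℕ} (u : Fin n) (N M : Finset (Fin n)) (Nt Mt : Finset (Fin m))
    (hmem : ∀ x, x ≠ u → x ∉ N → x ∈ M) (eN : ↥N ≃ ↥Nt) (eM : ↥M ≃ ↥Mt) :
    Fin n → Fin m ⊕ Unit :=
  fun x =>
    if hx : x = u then Sum.inr ()
    else if hxN : x ∈ N then Sum.inl ↑(eN ⟨x, hxN⟩)
    else Sum.inl ↑(eM ⟨x, hmem x hx hxN⟩)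

lemma pieceFun_u {n m : ℕ} {u : Fin n} {N M : Finset (Fin n)} {Nt Mt : Finset (Fin m)}
    {hmem : ∀ x, x ≠ u → x ∉ N → x ∈ M} {eN : ↥N ≃ ↥Nt} {eM : ↥M ≃ ↥Mt} :
    pieceFun u N M Nt Mt hmem eN eM u = Sum.inr () := dif_pos rfl

lemma pieceFun_N {n m : ℕ} {u : Fin n} {N M : Finset (Fin n)} {Nt Mt : Finset (Fin m)}
    {hmem : ∀ x, x ≠ u → x ∉ N → x ∈ M} {eN : ↥N ≃ ↥Nt} {eM : ↥M ≃ ↥Mt}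
    {x : Fin n} (hx : x ≠ u) (hxN : x ∈ N) :
    pieceFun u N M Nt Mt hmem eN eM x = Sum.inl ↑(eN ⟨x, hxN⟩) := by
  unfold pieceFun; rw [dif_neg hx, dif_pos hxN]

lemma pieceFun_M {n m : ℕ} {u : Fin n} {N M : Finset (Fin n)} {Nt Mt : Finset (Fin m)}
    {hmem : ∀ x, x ≠ u → x ∉ N → x ∈ M} {eN : ↥N ≃ ↥Nt} {eM : ↥M ≃ ↥Mt}
    {x : Fin n} (hx : x ≠ u) (hxN : x ∉ N) :
    pieceFun u N M Nt Mt hmem eN eM x = Sum.inl ↑(eM ⟨x, hmem x hx hxN⟩) := by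
  unfold pieceFun; rw [dif_neg hx, dif_neg hxN]

lemma forward_classify {n : ℕ} (hn : 4 ≤ n) (G : SimpleGraph (Fin n))
    (hconn : G.Connected) (hcl : G.cliqueNum = n - 1) :
    ∃ i ≤ n - 3, Nonempty (G ≃g TuranMinus n i) := by
  classical
  obtain ⟨s, hs⟩ := G.exists_isNClique_cliqueNum
  rw [hcl] at hs
  have hscard : s.card = n - 1 := hs.2
  have hcompl : sᶜ.card = 1 := by
    rw [Finset.card_compl, hscard, Fintype.card_fin]; omega
  obtain ⟨u, hu⟩ := Finset.card_eq_one.mp hcompl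
  have hmem_s : ∀ x : Fin n, x ≠ u → x ∈ s := by
    intro x hx
    by_contra hxs
    have : x ∈ sᶜ := Finset.mem_compl.mpr hxs
    rw [hu, Finset.mem_singleton] at this
    exact hx this
  have hus : u ∉ s := by
    have : u ∈ sᶜ := by rw [hu]; exact Finset.mem_singleton_self u
    exact Finset.mem_compl.mp this
  set N : Finset (Fin n) := s.filter (G.Adj u) with hN
  set M : Finset (Fin n) := s \ N with hM
  have hNsub : N ⊆ s := Finset.filter_subset _ _
  have hadj_uN : ∀ x, G.Adj u x ↔ x ∈ N := by
    intro x
    constructor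
    · intro h
      exact Finset.mem_filter.mpr ⟨hmem_s x (G.ne_of_adj h).symm, h⟩
    · intro h
      exact (Finset.mem_filter.mp h).2
  set d : ℕ := N.card with hd
  -- d ≥ 1 from connectivity
  have hd1 : 1 ≤ d := by
    have hsne : s.Nonempty := by rw [← Finset.card_pos, hscard]; omega
    obtain ⟨w, hw⟩ := hsne
    have hwu : w ≠ u := fun h => hus (h ▸ hw)
    obtain ⟨p⟩ := hconn.preconnected u w
    cases p with
    | nil => exact absurd rfl hwu.symm
    | cons h q =>
      rename_i v
      have hvN : v ∈ N := (hadj_uN v).mp h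
      rw [hd]
      exact Finset.card_pos.mpr ⟨v, hvN⟩
  -- d ≤ n - 2
  have hd2 : d ≤ n - 2 := by
    by_contra hcon
    push_neg at hcon
    have hNs : N = s := Finset.eq_of_subset_of_card_le hNsub (by omega)
    have hclq : G.IsClique (↑(insert u s)) := by
      intro x hx y hy hxy
      simp only [Finset.coe_insert, Set.mem_insert_iff, Finset.mem_coe] at hx hy
      rcases hx with rfl | hx
      · rcases hy with rfl | hy
        · exact absurd rfl hxy
        · exact (hadj_uN y).mpr (hNs ▸ hy)
      · rcases hy with rfl | hy
        · exact ((hadj_uN x).mpr (hNs ▸ hx)).symm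
        · exact hs.1 hx hy hxy
    have := IsClique.card_le_cliqueNum (tc := hclq)
    rw [Finset.card_insert_of_notMem hus, hscard, hcl] at this
    omega
  set i : ℕ := n - 2 - d with hi
  have hile : i ≤ n - 3 := by omega
  refine ⟨i, hile, ?_⟩
  -- target sets
  set Nt : Finset (Fin (n-1)) := Finset.univ.filter (fun a => i ≤ (a:ℕ) ∧ (a:ℕ) ≠ n-2) with hNt
  set Mt : Finset (Fin (n-1)) := Finset.univ.filter (fun a => ¬(i ≤ (a:ℕ) ∧ (a:ℕ) ≠ n-2)) with hMt
  have hiltn : i < n - 1 := by omega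
  have hn2lt : n - 2 < n - 1 := by omega
  have hNtcard : Nt.card = d := by
    have : Nt = Finset.Ico (⟨i, hiltn⟩ : Fin (n-1)) ⟨n-2, hn2lt⟩ := by
      ext a
      simp only [hNt, Finset.mem_filter, Finset.mem_univ, true_and, Finset.mem_Ico,
        Fin.le_def, Fin.lt_def]
      have := a.isLt
      omega
    rw [this, Fin.card_Ico]
    simp
    omega
  have hMtcard : Mt.card = (n - 1) - d := by
    have hsum := Finset.card_filter_add_card_filter_not
      (s := (Finset.univ : Finset (Fin (n-1)))) (p := fun a => i ≤ (a:ℕ) ∧ (a:ℕ) ≠ n-2)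
    rw [Finset.card_univ, Fintype.card_fin] at hsum
    have : Nt.card + Mt.card = n - 1 := hsum
    omega
  have hMcard : M.card = (n - 1) - d := by
    rw [hM, Finset.card_sdiff_of_subset hNsub, hscard]
  have eN : ↥N ≃ ↥Nt := Finset.equivOfCardEq (by rw [hNtcard])
  have eM : ↥M ≃ ↥Mt := Finset.equivOfCardEq (by rw [hMcard, hMtcard])
  have hmemM : ∀ x, x ≠ u → x ∉ N → x ∈ M :=
    fun x hx hxN => Finset.mem_sdiff.mpr ⟨hmem_s x hx, hxN⟩
  set f := pieceFun u N M Nt Mt hmemM eN eM with hf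
  have hfu : f u = Sum.inr () := pieceFun_u
  have hfN : ∀ x (hx : x ≠ u) (hxN : x ∈ N), f x = Sum.inl ↑(eN ⟨x, hxN⟩) :=
    fun _ hx hxN => pieceFun_N hx hxN
  have hfM : ∀ x (hx : x ≠ u) (hxN : x ∉ N), f x = Sum.inl ↑(eM ⟨x, hmemM x hx hxN⟩) :=
    fun _ hx hxN => pieceFun_M hx hxN
  -- properties of targets
  have hNtprop : ∀ p : ↥N, i ≤ ((eN p : Fin (n-1)) : ℕ) ∧ ((eN p : Fin (n-1)) : ℕ) ≠ n-2 := by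
    intro p
    exact (Finset.mem_filter.mp (eN p).2).2
  have hMtprop : ∀ p : ↥M, ¬(i ≤ ((eM p : Fin (n-1)) : ℕ) ∧ ((eM p : Fin (n-1)) : ℕ) ≠ n-2) := by
    intro p
    exact (Finset.mem_filter.mp (eM p).2).2
  -- injectivity
  have hinj : Function.Injective f := by
    intro x y hxy
    by_cases hx : x = u <;> by_cases hy : y = u
    · rw [hx, hy]
    · rw [hx, hfu] at hxy
      by_cases hyN : y ∈ N
      · rw [hfN y hy hyN] at hxy; exact absurd hxy (by simp)
      · rw [hfM y hy hyN] at hxy; exact absurd hxy (by simp)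
    · rw [hy, hfu] at hxy
      by_cases hxN : x ∈ N
      · rw [hfN x hx hxN] at hxy; exact absurd hxy (by simp)
      · rw [hfM x hx hxN] at hxy; exact absurd hxy (by simp)
    · by_cases hxN : x ∈ N <;> by_cases hyN : y ∈ N
      · rw [hfN x hx hxN, hfN y hy hyN] at hxy
        have h1 := Sum.inl_injective hxy
        have h2 := eN.injective (Subtype.ext h1)
        exact congrArg Subtype.val h2
      · rw [hfN x hx hxN, hfM y hy hyN] at hxy
        have h1 := Sum.inl_injective hxy
        exact absurd (h1 ▸ hNtprop ⟨x, hxN⟩) (hMtprop ⟨y, hmemM y hy hyN⟩)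
      · rw [hfM x hx hxN, hfN y hy hyN] at hxy
        have h1 := Sum.inl_injective hxy
        exact absurd (h1.symm ▸ hNtprop ⟨y, hyN⟩) (hMtprop ⟨x, hmemM x hx hxN⟩)
      · rw [hfM x hx hxN, hfM y hy hyN] at hxy
        have h1 := Sum.inl_injective hxy
        have h2 := eM.injective (Subtype.ext h1)
        exact congrArg Subtype.val h2
  have hbij : Function.Bijective f := by
    rw [Fintype.bijective_iff_injective_and_card]
    refine ⟨hinj, ?_⟩
    simp only [Fintype.card_fin, Fintype.card_sum, Fintype.card_unit]
    omega
  refine ⟨⟨Equiv.ofBijective f hbij, @fun a b => ?_⟩⟩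
  show (TuranMinus n i).Adj (f a) (f b) ↔ G.Adj a b
  by_cases ha : a = u <;> by_cases hb : b = u
  · rw [ha, hb, hfu]
    constructor
    · intro h; exact absurd h (tm_adj_inr_inr _ _)
    · intro h; exact absurd h (G.irrefl)
  · rw [ha, hfu]
    by_cases hbN : b ∈ N
    · rw [hfN b hb hbN, tm_adj_inr_inl]
      constructor
      · intro _; exact (hadj_uN b).mpr hbN
      · intro _; exact hNtprop ⟨b, hbN⟩
    · rw [hfM b hb hbN, tm_adj_inr_inl]
      constructor
      · intro h; exact absurd h (hMtprop ⟨b, hmemM b hb hbN⟩)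
      · intro h; exact absurd ((hadj_uN b).mp h) hbN
  · rw [hb, hfu]
    by_cases haN : a ∈ N
    · rw [hfN a ha haN]
      constructor
      · intro _; exact ((hadj_uN a).mpr haN).symm
      · intro _; exact ((tm_adj_inr_inl _ _).mpr (hNtprop ⟨a, haN⟩)).symm
    · rw [hfM a ha haN]
      constructor
      · intro h; exact absurd ((tm_adj_inr_inl _ _).mp h.symm) (hMtprop ⟨a, hmemM a ha haN⟩)
      · intro h; exact absurd ((hadj_uN a).mp h.symm) haN
  · have has : a ∈ s := hmem_s a ha
    have hbs : b ∈ s := hmem_s b hb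
    have hfa : ∃ c, f a = Sum.inl c := by
      by_cases haN : a ∈ N
      · exact ⟨_, hfN a ha haN⟩
      · exact ⟨_, hfM a ha haN⟩
    have hfb : ∃ c, f b = Sum.inl c := by
      by_cases hbN : b ∈ N
      · exact ⟨_, hfN b hb hbN⟩
      · exact ⟨_, hfM b hb hbN⟩
    obtain ⟨c, hc⟩ := hfa
    obtain ⟨c', hc'⟩ := hfb
    rw [hc, hc', tm_adj_inl_inl]
    constructor
    · intro hcc
      have hab : a ≠ b := by
        rintro rfl
        exact hcc (Sum.inl_injective (hc ▸ hc'))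
      exact hs.1 has hbs hab
    · intro hGadj
      have hab : a ≠ b := G.ne_of_adj hGadj
      intro hcc
      apply hab
      apply hinj
      rw [hc, hc', hcc]

/-- The connected `n`-vertex graphs with clique number `n-1` are exactly
`T_{n,n-1}, T_1, …, T_{n-3}`, and they are totally ordered in the spectral-moment order as
`T_{n-3} ≺ₛ T_{n-4} ≺ₛ ⋯ ≺ₛ T_1 ≺ₛ T_{n,n-1}`. -/
theorem turanMinus_classification_and_order (n : ℕ) (hn : 4 ≤ n) :
    (∀ G : SimpleGraph (Fin n),
      (G.Connected ∧ G.cliqueNum = n - 1) ↔ ∃ i ≤ n - 3, Nonempty (G ≃g TuranMinus n i)) ∧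
    (∀ i, i + 1 ≤ n - 3 → SPrec (TuranMinus n (i + 1)) (TuranMinus n i)) := by
  constructor
  · intro G
    constructor
    · rintro ⟨hconn, hcl⟩
      exact forward_classify hn G hconn hcl
    · rintro ⟨i, hi, ⟨e⟩⟩
      refine ⟨(Iso.connected_iff e).mpr (tm_connected hn hi), ?_⟩
      rw [cliqueNum_congr e, tm_cliqueNum hn]
  · intro i hi
    refine ⟨2, by norm_num, ?_, ?_, sm_two_lt hn hi⟩
    · simp only [Fintype.card_sum, Fintype.card_fin, Fintype.card_unit]
      omega
    · intro k hk
      interval_cases k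
      · rw [sm_zero, sm_zero]
      · rw [sm_one, sm_one]
end
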